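/- arXiv:2204.11149 — 6 statements merged into one kernel-verified Lean document; each statement's English description precedes it below -/
import Mathlib

section
/- Let f be a non-negative submodular function and O a maximizer of f over sets of size at most k (with |O| ≤ k). If R is a random subset of O in which every element of O appears with probability at least p (not necessarily independently), then E[f(R)] ≥ p·f(O). -/
/-!
Induction on `O`. Let `q x = P(x ∈ R)` and pick `x ∈ O` with `q x` minimal. Submodularity gives
`f R ≥ f (R \ {x}) + [x ∈ R] · (f O - f (O \ {x}))`. Every element of `O \ {x}` lies in `R \ {x}`
with probability at least `q x`, so by induction `E[f (R \ {x})] ≥ q x · f (O \ {x})`, and taking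
expectations gives `E[f R] ≥ q x · f O ≥ p · f O`.
-/

open Finset

section

variable {E Ω : Type*} [DecidableEq E] [Fintype Ω]

theorem apply_erase_add_ite_le_of_submodular (f : Finset E → ℝ)
    (hsub : ∀ A B, f (A ∪ B) + f (A ∩ B) ≤ f A + f B) {R O : Finset E} (hRO : R ⊆ O) (x : E) :
    f (R.erase x) + (if x ∈ R then f O - f (O.erase x) else 0) ≤ f R := by
  split_ifs with hx
  · have h := hsub R (O.erase x)
    rw [union_erase_of_mem hx, union_eq_right.mpr hRO, inter_erase, inter_eq_left.mpr hRO] at h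
    linarith
  · rw [erase_eq_of_notMem hx, add_zero]

theorem sum_mul_ite_mem (μ : Ω → ℝ) (R : Ω → Finset E) (x : E) (c : ℝ) :
    ∑ ω, μ ω * (if x ∈ R ω then c else 0) = (∑ ω, if x ∈ R ω then μ ω else 0) * c := by
  rw [sum_mul]
  exact sum_congr rfl fun ω _ => by split_ifs <;> simp

theorem mul_le_expectation_of_submodular (f : Finset E → ℝ) (hnn : ∀ S, 0 ≤ f S)
    (hsub : ∀ A B, f (A ∪ B) + f (A ∩ B) ≤ f A + f B)
    (μ : Ω → ℝ) (hμnn : ∀ ω, 0 ≤ μ ω) (hμ1 : ∑ ω, μ ω = 1) (O : Finset E) :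
    ∀ (R : Ω → Finset E), (∀ ω, R ω ⊆ O) → ∀ p ≤ 1,
      (∀ x ∈ O, p ≤ ∑ ω, if x ∈ R ω then μ ω else 0) → p * f O ≤ ∑ ω, μ ω * f (R ω) := by
  induction O using strongInduction with
  | H O ih =>
  intro R hR p hp1 hprob
  set q : E → ℝ := fun x => ∑ ω, if x ∈ R ω then μ ω else 0
  rcases O.eq_empty_or_nonempty with rfl | hne
  · have hRempty : ∀ ω, R ω = ∅ := fun ω => subset_empty.mp (hR ω)
    simp only [hRempty, ← sum_mul, hμ1, one_mul]
    exact mul_le_of_le_one_left (hnn ∅) hp1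
  obtain ⟨x, hxO, hxmin⟩ := O.exists_min_image q hne
  have hq1 : q x ≤ 1 :=
    hμ1 ▸ sum_le_sum fun ω _ => by split_ifs <;> simp [hμnn ω]
  have hrest : q x * f (O.erase x) ≤ ∑ ω, μ ω * f ((R ω).erase x) := by
    refine ih _ (erase_ssubset hxO) _ (fun ω => erase_subset_erase x (hR ω)) _ hq1 ?_
    intro y hy
    simpa [q, ne_of_mem_erase hy] using hxmin y (mem_of_mem_erase hy)
  calc p * f O ≤ q x * f O := mul_le_mul_of_nonneg_right (hprob x hxO) (hnn O)
    _ = q x * f (O.erase x) + q x * (f O - f (O.erase x)) := by ring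
    _ ≤ ∑ ω, μ ω * (f ((R ω).erase x) + if x ∈ R ω then f O - f (O.erase x) else 0) := by
        simp only [mul_add, sum_add_distrib, sum_mul_ite_mem]
        exact add_le_add_left hrest _
    _ ≤ ∑ ω, μ ω * f (R ω) := sum_le_sum fun ω _ =>
        mul_le_mul_of_nonneg_left (apply_erase_add_ite_le_of_submodular f hsub (hR ω) x) (hμnn ω)

end

theorem stmt6_general {E : Type*} [DecidableEq E] {Ω : Type*} [Fintype Ω]
    (f : Finset E → ℝ)
    (hnn : ∀ S, 0 ≤ f S)
    (hsub : ∀ A B, f (A ∪ B) + f (A ∩ B) ≤ f A + f B)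
    (O : Finset E)
    (μ : Ω → ℝ) (hμnn : ∀ ω, 0 ≤ μ ω) (hμ1 : ∑ ω, μ ω = 1)
    (R : Ω → Finset E) (hR : ∀ ω, R ω ⊆ O)
    (p : ℝ) (hp1 : p ≤ 1)
    (hprob : ∀ x ∈ O, p ≤ ∑ ω, if x ∈ R ω then μ ω else 0) :
    p * f O ≤ ∑ ω, μ ω * f (R ω) :=
  mul_le_expectation_of_submodular f hnn hsub μ hμnn hμ1 O R hR p hp1 hprob

/-- Sampling lemma: if `O` maximizes a non-negative submodular `f` over sets of
size at most `k` and `R` is a random subset of `O` containing each element of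
`O` with probability at least `p`, then `E[f(R)] ≥ p·f(O)`. -/
theorem stmt6 {E : Type*} [DecidableEq E] {Ω : Type*} [Fintype Ω]
    (f : Finset E → ℝ)
    (hnn : ∀ S, 0 ≤ f S)
    (hsub : ∀ A B, f (A ∪ B) + f (A ∩ B) ≤ f A + f B)
    (k : ℕ) (O : Finset E) (hOcard : O.card ≤ k)
    (hOopt : ∀ X : Finset E, X.card ≤ k → f X ≤ f O)
    (μ : Ω → ℝ) (hμnn : ∀ ω, 0 ≤ μ ω) (hμ1 : ∑ ω, μ ω = 1)
    (R : Ω → Finset E) (hR : ∀ ω, R ω ⊆ O)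
    (p : ℝ) (hp0 : 0 ≤ p) (hp1 : p ≤ 1)
    (hprob : ∀ x ∈ O, p ≤ ∑ ω, if x ∈ R ω then μ ω else 0) :
    p * f O ≤ ∑ ω, μ ω * f (R ω) :=
  stmt6_general f hnn hsub O μ hμnn hμ1 R hR p hp1 hprob
end

section
/- Let f be a monotone non-negative submodular function on E. There exists a non-negative symmetric submodular function g on E, defined by g(X) = f(X) + f(E \ X) − f(E), such that if f has the property that f(X) = f(E) for every X with |X| ≥ 4k, and |E| ≥ 5k, then g(X) = f(X) for every X with |X| ≤ k. In particular, g is symmetric, submodular, and non-negative, and maximizing g under cardinality constraint k is equivalent to maximizing f. -/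
open Finset

section BooleanAlgebra

variable {α : Type*} [BooleanAlgebra α]

def symmetrization (f : α → ℝ) (a : α) : ℝ := f a + f aᶜ - f ⊤

variable (f : α → ℝ)

theorem symmetrization_compl (a : α) : symmetrization f aᶜ = symmetrization f a := by
  rw [symmetrization, symmetrization, compl_compl]
  ring

theorem symmetrization_submodular (hf : ∀ a b, f (a ⊔ b) + f (a ⊓ b) ≤ f a + f b) (a b : α) :
    symmetrization f (a ⊔ b) + symmetrization f (a ⊓ b) ≤
      symmetrization f a + symmetrization f b := by
  have hcompl := hf aᶜ bᶜ
  rw [← compl_inf, ← compl_sup] at hcompl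
  unfold symmetrization
  linarith [hf a b]

theorem symmetrization_nonneg (hf : ∀ a b, f (a ⊔ b) + f (a ⊓ b) ≤ f a + f b) (hbot : 0 ≤ f ⊥)
    (a : α) : 0 ≤ symmetrization f a := by
  have h := hf a aᶜ
  rw [sup_compl_eq_top, inf_compl_eq_bot] at h
  unfold symmetrization
  linarith

theorem symmetrization_eq_self {a : α} (ha : f aᶜ = f ⊤) : symmetrization f a = f a := by
  rw [symmetrization, ha]
  ring

end BooleanAlgebra

theorem stmt7_general {E : Type*} [Fintype E] [DecidableEq E] (f : Finset E → ℝ)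
    (hnn : ∀ S, 0 ≤ f S)
    (hsub : ∀ A B, f (A ∪ B) + f (A ∩ B) ≤ f A + f B)
    (k : ℕ)
    (hstar : ∀ X : Finset E, 4 * k ≤ X.card → f X = f univ)
    (hcard : 5 * k ≤ Fintype.card E) :
    ∃ g : Finset E → ℝ,
      (∀ X, g X = f X + f (univ \ X) - f univ) ∧
      (∀ X, g X = g (univ \ X)) ∧
      (∀ A B, g (A ∪ B) + g (A ∩ B) ≤ g A + g B) ∧
      (∀ X, 0 ≤ g X) ∧
      (∀ X : Finset E, X.card ≤ k → g X = f X) := by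
  refine ⟨symmetrization f, fun X => by rw [symmetrization, compl_eq_univ_sdiff, top_eq_univ],
    fun X => by rw [← compl_eq_univ_sdiff, symmetrization_compl], symmetrization_submodular f hsub,
    symmetrization_nonneg f hsub (hnn ∅), fun X hX => symmetrization_eq_self f ?_⟩
  apply hstar
  rw [card_compl]
  omega

/-- The symmetrization `g(X) = f(X) + f(E \ X) − f(E)` of a monotone
non-negative submodular `f` is symmetric, submodular and non-negative, and if
`f(X) = f(E)` whenever `|X| ≥ 4k` and `|E| ≥ 5k`, then `g(X) = f(X)` for all
`|X| ≤ k`. -/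
theorem stmt7 {E : Type*} [Fintype E] [DecidableEq E] (f : Finset E → ℝ)
    (hnn : ∀ S, 0 ≤ f S)
    (hmono : ∀ S T : Finset E, S ⊆ T → f S ≤ f T)
    (hsub : ∀ A B, f (A ∪ B) + f (A ∩ B) ≤ f A + f B)
    (k : ℕ)
    (hstar : ∀ X : Finset E, 4 * k ≤ X.card → f X = f univ)
    (hcard : 5 * k ≤ Fintype.card E) :
    ∃ g : Finset E → ℝ,
      (∀ X, g X = f X + f (univ \ X) - f univ) ∧
      (∀ X, g X = g (univ \ X)) ∧
      (∀ A B, g (A ∪ B) + g (A ∩ B) ≤ g A + g B) ∧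
      (∀ X, 0 ≤ g X) ∧
      (∀ X : Finset E, X.card ≤ k → g X = f X) :=
  stmt7_general f hnn hsub k hstar hcard
end

section
/- Greedy exchange inequality: Let f be submodular, O_H ⊆ E, and let X = {x₁,…,x_m} be built greedily so that each xⱼ maximizes f(x | O_H ∪ X⁽ʲ⁻¹⁾) over available elements, with all marginals f(xⱼ | O_H ∪ X⁽ʲ⁻¹⁾) ≥ 0, where X⁽ʲ⁾ = {x₁,…,xⱼ}. Suppose O_L⁽⁰⁾ = {o₁,…,o_r} with r ≤ m is a set of available elements, so that f(xⱼ | O_H ∪ X⁽ʲ⁻¹⁾) ≥ f(oⱼ | O_H ∪ X⁽ʲ⁻¹⁾) for all j ≤ r. Then f(X | O_H) ≥ f(O_L⁽⁰⁾ | O_H ∪ X), and consequently f(X | O_L⁽⁰⁾ ∪ O_H) ≤ 2·f(X | O_H) − f(O_L⁽⁰⁾ | O_H). -/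
/-!
Add `o₀, …, o_{r-1}` one at a time on top of `O_H ∪ X`. Since `O_H ∪ X⁽ʲ⁾ ⊆ O_H ∪ X`, submodularity
bounds the `j`-th gain by `f(oⱼ | O_H ∪ X⁽ʲ⁾)` (or it is zero when `oⱼ` is already present), and the
greedy choice bounds that by the `j`-th greedy gain. The greedy gains beyond `r` are nonnegative,
so summing gives `f(O_L⁽⁰⁾ | O_H ∪ X) ≤ f(X | O_H)`; the second inequality is a rearrangement.
-/

open Finset

theorem monotoneOn_nat_Iic_of_le_succ {α : Type*} [Preorder α] {f : ℕ → α} {m : ℕ}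
    (hf : ∀ n < m, f n ≤ f (n + 1)) : MonotoneOn f (Set.Iic m) := by
  intro a _ b hb hab
  induction b, hab using Nat.le_induction with
  | base => rfl
  | succ b _ ih => exact (ih (by grind)).trans (hf b (by grind))

section Submodular

variable {E : Type*} [DecidableEq E]

def IsSubmodular (f : Finset E → ℝ) : Prop :=
  ∀ A B, f (A ∪ B) + f (A ∩ B) ≤ f A + f B

theorem IsSubmodular.insert_sub_le {f : Finset E → ℝ} (hf : IsSubmodular f) {A B : Finset E}
    {a : E} (hAB : A ⊆ B) (ha : a ∉ B) : f (insert a B) - f B ≤ f (insert a A) - f A := by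
  have h := hf (insert a A) B
  rw [insert_union, union_eq_right.mpr hAB, insert_inter_of_notMem ha,
    inter_eq_left.mpr hAB] at h
  linarith

/-- `C` is the greedy chain `O_H ∪ X⁽ʲ⁾`. -/
theorem IsSubmodular.image_sub_le_of_greedy {f : Finset E → ℝ} (hf : IsSubmodular f)
    {m r : ℕ} (hrm : r ≤ m) {C : ℕ → Finset E} (hC : ∀ j < m, C j ⊆ C (j + 1))
    (hnonneg : ∀ j < m, 0 ≤ f (C (j + 1)) - f (C j)) {o : ℕ → E}
    (hgreedy : ∀ j < r, f (insert (o j) (C j)) - f (C j) ≤ f (C (j + 1)) - f (C j)) :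
    f (C m ∪ (range r).image o) - f (C m) ≤ f (C m) - f (C 0) := by
  set S : ℕ → Finset E := fun j ↦ C m ∪ (range j).image o
  have hstep : ∀ j < r, f (S (j + 1)) - f (S j) ≤ f (C (j + 1)) - f (C j) := by
    intro j hj
    have hS : S (j + 1) = insert (o j) (S j) := by
      simp only [S, range_add_one, image_insert, union_insert]
    by_cases hmem : o j ∈ S j
    · rw [hS, insert_eq_self.mpr hmem, sub_self]
      exact hnonneg j (by omega)
    · have hCS : C j ⊆ S j :=
        (monotoneOn_nat_Iic_of_le_succ hC (Set.mem_Iic.mpr (by omega)) (Set.mem_Iic.mpr le_rfl)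
          (by omega)).trans subset_union_left
      rw [hS]
      exact (hf.insert_sub_le hCS hmem).trans (hgreedy j hj)
  have hgap : f (C 0) - f (S 0) ≤ f (C r) - f (S r) :=
    monotoneOn_nat_Iic_of_le_succ (f := fun j ↦ f (C j) - f (S j))
      (fun j hj ↦ by linarith [hstep j hj])
      (Set.mem_Iic.mpr r.zero_le) (Set.mem_Iic.mpr le_rfl) r.zero_le
  have hCrm : f (C r) ≤ f (C m) :=
    monotoneOn_nat_Iic_of_le_succ (f := fun j ↦ f (C j)) (fun j hj ↦ by linarith [hnonneg j hj])
      (Set.mem_Iic.mpr hrm) (Set.mem_Iic.mpr le_rfl) hrm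
  have hS0 : S 0 = C m := by simp [S]
  simp only [hS0] at hgap
  linarith

end Submodular

theorem stmt13_general {E : Type*} [DecidableEq E] (f : Finset E → ℝ)
    (hsub : ∀ A B, f (A ∪ B) + f (A ∩ B) ≤ f A + f B)
    (m r : ℕ) (hrm : r ≤ m)
    (OH : Finset E) (x : ℕ → E) (X : ℕ → Finset E)
    (hX0 : X 0 = ∅)
    (hXsucc : ∀ j < m, X (j + 1) = insert (x j) (X j))
    (hnonneg : ∀ j < m, 0 ≤ f (OH ∪ X (j + 1)) - f (OH ∪ X j))
    (o : ℕ → E)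
    (OL : Finset E) (hOL : OL = (Finset.range r).image o)
    (hgreedy : ∀ j < r,
        f (insert (o j) (OH ∪ X j)) - f (OH ∪ X j) ≤
          f (OH ∪ X (j + 1)) - f (OH ∪ X j)) :
    (f (X m ∪ OH) - f OH ≥ f (OL ∪ (OH ∪ X m)) - f (OH ∪ X m)) ∧
    (f (X m ∪ (OL ∪ OH)) - f (OL ∪ OH) ≤
      2 * (f (X m ∪ OH) - f OH) - (f (OL ∪ OH) - f OH)) := by
  have hchain : ∀ j < m, OH ∪ X j ⊆ OH ∪ X (j + 1) := fun j hj ↦ by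
    rw [hXsucc j hj]
    exact union_subset_union_right (subset_insert _ _)
  have hexch := IsSubmodular.image_sub_le_of_greedy hsub hrm hchain hnonneg hgreedy
  rw [hX0, union_empty, ← hOL, union_comm] at hexch
  have hXOH : X m ∪ OH = OH ∪ X m := union_comm _ _
  have hall : X m ∪ (OL ∪ OH) = OL ∪ (OH ∪ X m) := by
    rw [union_comm, union_assoc]
  rw [hXOH, hall]
  constructor <;> linarith

/-- Greedy exchange inequality: if `X = {x₀,…,x_{m−1}}` is built greedily on
top of `O_H` with non-negative marginals dominating those of the distinct
elements `o₀,…,o_{r−1}` (with `r ≤ m`), then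
`f(X | O_H) ≥ f(O_L⁽⁰⁾ | O_H ∪ X)` and consequently
`f(X | O_L⁽⁰⁾ ∪ O_H) ≤ 2 f(X | O_H) − f(O_L⁽⁰⁾ | O_H)`. -/
theorem stmt13 {E : Type*} [DecidableEq E] (f : Finset E → ℝ)
    (hsub : ∀ A B, f (A ∪ B) + f (A ∩ B) ≤ f A + f B)
    (m r : ℕ) (hrm : r ≤ m)
    (OH : Finset E) (x : ℕ → E) (X : ℕ → Finset E)
    (hX0 : X 0 = ∅)
    (hXsucc : ∀ j < m, X (j + 1) = insert (x j) (X j))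
    (hnonneg : ∀ j < m, 0 ≤ f (OH ∪ X (j + 1)) - f (OH ∪ X j))
    (o : ℕ → E) (hoinj : Set.InjOn o (Set.Iio r))
    (OL : Finset E) (hOL : OL = (Finset.range r).image o)
    (hgreedy : ∀ j < r,
        f (insert (o j) (OH ∪ X j)) - f (OH ∪ X j) ≤
          f (OH ∪ X (j + 1)) - f (OH ∪ X j)) :
    (f (X m ∪ OH) - f OH ≥ f (OL ∪ (OH ∪ X m)) - f (OH ∪ X m)) ∧
    (f (X m ∪ (OL ∪ OH)) - f (OL ∪ OH) ≤
      2 * (f (X m ∪ OH) - f OH) - (f (OL ∪ OH) - f OH)) :=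
  stmt13_general f hsub m r hrm OH x X hX0 hXsucc hnonneg o OL hOL hgreedy
end

section
/- Symmetric punchline inequality: Let f be non-negative symmetric submodular on a finite set V, and let O_H, S₂, S₃ be subsets with S₂ ⊆ S₃ and S₃ ∩ O_H = ∅. If f(O_H | S₂) = −f(O_H), then f(S₃ \ S₂ | O_H) ≥ f(S₃ \ S₂ | S₂). -/
/-!
Submodularity applied to `(S₃ \ S₂) ∪ O_H` and `O_H ∪ S₂`, whose intersection is `O_H`, reduces
the claim to the lower bound `f(O_H | S₃) ≥ -f(O_H)`. For a symmetric submodular `f` that bound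
holds for every set disjoint from `O_H`: submodularity applied to `O_H ∪ S₃` and the complement
of `O_H` gives `f(V) + f(S₃) ≤ f(O_H ∪ S₃) + f(O_H)`, and `f(V) ≥ 0`. The hypothesis
`f(O_H | S₂) = -f(O_H)` says that this bound is attained at `S₂`.
-/

open Finset

section

variable {V : Type*} [DecidableEq V]

theorem apply_union_union_add_le (f : Finset V → ℝ)
    (hsub : ∀ A B, f (A ∪ B) + f (A ∩ B) ≤ f A + f B) {A B : Finset V} (hAB : Disjoint A B)
    (C : Finset V) : f (A ∪ B ∪ C) + f C ≤ f (A ∪ C) + f (C ∪ B) := by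
  have hunion : (A ∪ C) ∪ (C ∪ B) = A ∪ B ∪ C := by grind
  have hinter : (A ∪ C) ∩ (C ∪ B) = C := by
    rw [union_comm C B, ← inter_union_distrib_right, disjoint_iff_inter_eq_empty.mp hAB,
      empty_union]
  simpa only [hunion, hinter] using hsub (A ∪ C) (C ∪ B)

theorem sub_le_apply_union_of_disjoint [Fintype V] (f : Finset V → ℝ)
    (hsub : ∀ A B, f (A ∪ B) + f (A ∩ B) ≤ f A + f B) (hsym : ∀ S, f S = f (univ \ S))
    (huniv : 0 ≤ f univ) {X Y : Finset V} (hXY : Disjoint X Y) :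
    f Y - f X ≤ f (X ∪ Y) := by
  have hunion : (X ∪ Y) ∪ (univ \ X) = univ := by grind
  have hinter : (X ∪ Y) ∩ (univ \ X) = Y := by
    rw [union_inter_distrib_right, inter_sdiff_self, empty_union]
    exact inter_eq_left.mpr (subset_sdiff.mpr ⟨subset_univ Y, hXY.symm⟩)
  have key := hsub (X ∪ Y) (univ \ X)
  rw [hunion, hinter, ← hsym X] at key
  linarith

end

/-- Symmetric punchline: for a non-negative symmetric submodular `f`, if
`S₂ ⊆ S₃`, `S₃` is disjoint from `O_H`, and `f(O_H | S₂) = −f(O_H)`, then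
`f(S₃ \ S₂ | O_H) ≥ f(S₃ \ S₂ | S₂)`. -/
theorem stmt14 {V : Type*} [Fintype V] [DecidableEq V] (f : Finset V → ℝ)
    (hnn : ∀ S, 0 ≤ f S)
    (hsym : ∀ S, f S = f (univ \ S))
    (hsub : ∀ A B, f (A ∪ B) + f (A ∩ B) ≤ f A + f B)
    (OH S₂ S₃ : Finset V) (h23 : S₂ ⊆ S₃) (hdisj : Disjoint S₃ OH)
    (hhyp : f (OH ∪ S₂) - f S₂ = -f OH) :
    f ((S₃ \ S₂) ∪ OH) - f OH ≥ f ((S₃ \ S₂) ∪ S₂) - f S₂ := by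
  have hsubmod := apply_union_union_add_le f hsub (sdiff_disjoint (t := S₃) (s := S₂)) OH
  have hlower := sub_le_apply_union_of_disjoint f hsub hsym (hnn univ) hdisj.symm
  rw [sdiff_union_of_subset h23] at hsubmod ⊢
  rw [union_comm OH S₃] at hlower
  linarith
end

section
/- Factor-revealing bound (second program of Theorem 5.2): Let a, b, c, d, α ∈ ℝ satisfy: a + 2b = 1, 2α ≥ 1 − c, 1 − c − b ≤ 0, a + b ≥ c, a + b ≤ 0.9, a ≤ c, 0 ≤ b ≤ 0.9, 0 ≤ c ≤ 0.9, 0 ≤ α ≤ 1. Then max{b, a + b, α + c} ≥ 0.6. -/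
theorem le_max_max_of_le_weighted_sum {K : Type*} [Field K] [LinearOrder K]
    [IsStrictOrderedRing K] {x y z p q r t : K} (hp : 0 ≤ p) (hq : 0 ≤ q) (hr : 0 ≤ r)
    (hpqr : p + q + r = 1) (ht : t ≤ p * x + q * y + r * z) : t ≤ max x (max y z) := by
  set m := max x (max y z)
  have hx : p * x ≤ p * m := mul_le_mul_of_nonneg_left (le_max_left _ _) hp
  have hy : q * y ≤ q * m :=
    mul_le_mul_of_nonneg_left ((le_max_left _ _).trans (le_max_right _ _)) hq
  have hz : r * z ≤ r * m :=
    mul_le_mul_of_nonneg_left ((le_max_right _ _).trans (le_max_right _ _)) hr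
  calc t ≤ p * x + q * y + r * z := ht
    _ ≤ p * m + q * m + r * m := by gcongr
    _ = m := by rw [← add_mul, ← add_mul, hpqr, one_mul]

theorem stmt17_general (a b c α : ℝ)
    (h1 : a + 2 * b = 1) (h2 : 2 * α ≥ 1 - c) (h3 : 1 - c - b ≤ 0) :
    max b (max (a + b) (α + c)) ≥ 0.6 := by
  have hab : a + b = 1 - b := by linarith
  have hαc : 1 - b / 2 ≤ α + c := by linarith
  -- The weights 2/5, 1/5, 2/5 make the coefficient of b vanish.
  refine le_max_max_of_le_weighted_sum (p := 2 / 5) (q := 1 / 5) (r := 2 / 5)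
    (by norm_num) (by norm_num) (by norm_num) (by norm_num) ?_
  linarith

/-- Factor-revealing bound (second program of Theorem 5.2). -/
theorem stmt17 (a b c d α : ℝ)
    (h1 : a + 2 * b = 1) (h2 : 2 * α ≥ 1 - c) (h3 : 1 - c - b ≤ 0)
    (h4 : a + b ≥ c) (h5 : a + b ≤ 0.9) (h6 : a ≤ c)
    (h7 : 0 ≤ b) (h8 : b ≤ 0.9) (h9 : 0 ≤ c) (h10 : c ≤ 0.9)
    (h11 : 0 ≤ α) (h12 : α ≤ 1) :
    max b (max (a + b) (α + c)) ≥ 0.6 :=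
  stmt17_general a b c α h1 h2 h3
end

section
/- Factor-revealing infeasibility (second program of Theorem 6.4): There do not exist real numbers a, b, c, d satisfying all of: 1 − a − 2b ≥ 0; 1 − c − b ≤ 0; a + 2b ≥ 1; a + b ≥ c; a + b ≤ 0.5029; c + d ≤ 0.5029; a ≤ c; 0 ≤ b ≤ 0.5029; 0 ≤ c ≤ 0.9; 0 ≤ d; b ≤ 0.5029; (2 − 1/e)·(1 − a − b − d) − d − a ≤ 0.5029, where e is Euler's number. -/
/-! The constraints force `a + 2b = 1`, which with `a + b ≤ 0.5029` gives `a ≤ 0.0058`; then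
`c ≥ 1 - b ≥ 0.4971` and `c + d ≤ 0.5029` give `d ≤ 0.0058`. Hence `1 - a - b - d ≥ 0.4913`, and already
the crude bound `2 - 1/e > 3/2` makes the objective exceed `0.5029`. -/

lemma three_halves_lt_two_sub_inv_exp_one : (3 / 2 : ℝ) < 2 - 1 / Real.exp 1 := by
  have hinv : 1 / Real.exp 1 < 1 / 2 :=
    one_div_lt_one_div_of_lt two_pos Real.exp_one_gt_two
  linarith

/-- Factor-revealing infeasibility (second program of Theorem 6.4). -/
theorem stmt19 :
    ¬ ∃ a b c d : ℝ,
      1 - a - 2 * b ≥ 0 ∧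
      1 - c - b ≤ 0 ∧
      a + 2 * b ≥ 1 ∧
      a + b ≥ c ∧
      a + b ≤ 0.5029 ∧
      c + d ≤ 0.5029 ∧
      a ≤ c ∧
      0 ≤ b ∧ b ≤ 0.5029 ∧
      0 ≤ c ∧ c ≤ 0.9 ∧
      0 ≤ d ∧
      (2 - 1 / Real.exp 1) * (1 - a - b - d) - d - a ≤ 0.5029 := by
  rintro ⟨a, b, c, d, hab_le, hcb, hab_ge, -, hab, hcd, -, -, hb, -, -, -, hobj⟩
  have ha : a ≤ 0.0058 := by linarith
  have hc : 0.4971 ≤ c := by linarith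
  have hd : d ≤ 0.0058 := by linarith
  have hrest : 0.4913 ≤ 1 - a - b - d := by linarith
  have hscale : 3 / 2 * (1 - a - b - d) ≤ (2 - 1 / Real.exp 1) * (1 - a - b - d) :=
    mul_le_mul_of_nonneg_right three_halves_lt_two_sub_inv_exp_one.le (by linarith)
  linarith
end
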